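/- Let S be a compact invariant set for the multiflow Φ of a differential inclusion, A an attractor in S, and R its dual repeller. Then A is the dual attractor of R: A = {x ∈ S | α_S(x) ⊄ R}. -/

import Mathlib

/-!
The analytic core is that the graph `{(a, b) | b ∈ Φ(m, a)}` is closed. Solutions in the compact
set `S` are uniformly Lipschitz because `F` is bounded there, so a limit of solutions along an
ultrafilter is Lipschitz, hence the integral of its derivative, and upper semicontinuity together
with convexity of the values of `F` puts that derivative in `F`. As `Φ` takes values in `S`, the map
`a ↦ Φ(m, a)` is then upper semicontinuous and sends compact sets to compact sets.

Write `A = ω_S(U)` and let `O` be open with `A ⊆ O` and `O ∩ S ⊆ U`. A point `x ∈ A` is reached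
at every time `j` from some `p_j` close to `A`; a cluster point of `(p_j)` lies in `α_S(x) ∩ U`,
so its `ω_S`-limit set lies in `A`. Conversely, if `y ∈ α_S(x)` and `ω_S(y) ⊆ A`, then
`Φ(t₀, y) ⊆ O` for some `t₀`, hence `Φ(t₀, b) ⊆ O` for every `b` near `y`; taking such `b` from
which `x` is reached after a long time shows that `x` is reached from `U` after arbitrarily long
times, i.e. `x ∈ ω_S(U) = A`.
-/

open Set MeasureTheory Filter Topology

namespace DIncl

variable {E : Type*} [NormedAddCommGroup E] [NormedSpace ℝ E] [CompleteSpace E]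

/-- Upper semicontinuity of a set-valued map on a set `D`. -/
def USCOn {α β : Type*} [PseudoMetricSpace α] [PseudoMetricSpace β]
    (F : α → Set β) (D : Set α) : Prop :=
  ∀ x ∈ D, ∀ ε > 0, ∃ δ > 0, ∀ y ∈ D, dist y x < δ →
    F y ⊆ {z | ∃ w ∈ F x, dist z w < ε}

/-- The Filippov conditions on `D`: upper semicontinuous with compact, convex,
nonempty values. -/
def FilippovOn {α : Type*} [PseudoMetricSpace α] (F : α → Set E) (D : Set α) : Prop :=
  USCOn F D ∧ ∀ x ∈ D, IsCompact (F x) ∧ Convex ℝ (F x) ∧ (F x).Nonempty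

/-- `x` is a solution of the differential inclusion `ẋ ∈ F x` on the set `I`,
staying in `X`: an absolutely continuous function whose a.e. derivative lies in
`F (x t)`, encoded via the integral representation `x b = x a + ∫_a^b v`. -/
def IsSolOn (F : E → Set E) (X : Set E) (x : ℝ → E) (I : Set ℝ) : Prop :=
  (∀ t ∈ I, x t ∈ X) ∧
  ∃ v : ℝ → E,
    (∀ a ∈ I, ∀ b ∈ I, IntervalIntegrable v volume a b) ∧
    (∀ᵐ t ∂volume, t ∈ I → v t ∈ F (x t)) ∧
    (∀ a ∈ I, ∀ b ∈ I, x b = x a + ∫ t in a..b, v t)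

/-- The solution multiflow `Φ(T,a)` of `ẋ ∈ F x` in `X`. -/
def mflow (F : E → Set E) (X : Set E) (T : ℝ) (a : E) : Set E :=
  {b | ∃ x : ℝ → E, IsSolOn F X x (Icc 0 T) ∧ x 0 = a ∧ x T = b}

/-- `Φ(I,U)`. -/
def mflowSet (F : E → Set E) (X : Set E) (I : Set ℝ) (U : Set E) : Set E :=
  ⋃ t ∈ I, ⋃ a ∈ U, mflow F X t a

/-- Maximal invariant subset of `U`: points admitting a full-time orbit in `U`. -/
def maxInv (F : E → Set E) (U : Set E) : Set E :=
  {x | ∃ ψ : ℝ → E, IsSolOn F U ψ univ ∧ ψ 0 = x}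

/-- `S` is invariant: every point of `S` has a full-time orbit staying in `S`. -/
def IsInvSet (F : E → Set E) (S : Set E) : Prop := S ⊆ maxInv F S

/-- The restricted omega-limit set `ω_S(U)` (with `Φ^S = mflow F S`). -/
def omegaS (F : E → Set E) (S U : Set E) : Set E :=
  ⋂ t ∈ Ici (0:ℝ), closure (mflowSet F S (Ici t) U)

/-- `(Φ^S)^*(I,U)` for the dual (backward-time) multiflow. -/
def mflowDualSet (F : E → Set E) (S : Set E) (I : Set ℝ) (U : Set E) : Set E :=
  ⋃ t ∈ I, ⋃ a ∈ U, {b | a ∈ mflow F S (-t) b}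

/-- The restricted alpha-limit set `α_S(U)`. -/
def alphaS (F : E → Set E) (S U : Set E) : Set E :=
  ⋂ t ∈ Iio (0:ℝ), closure (mflowDualSet F S (Iic t) U)

/-- The interior of `U` relative to `X`. -/
def relInt (X U : Set E) : Set E := {x ∈ X | U ∈ nhdsWithin x X}

/-- The closure of `U` relative to `X`. -/
def relCl (X U : Set E) : Set E := closure U ∩ X

/-- `A` is an attractor in `S`: the `ω_S`-limit set of a neighborhood of itself in `S`. -/
def IsAttractorIn (F : E → Set E) (S A : Set E) : Prop :=
  A ⊆ S ∧ ∃ U, A ⊆ relInt S U ∧ U ⊆ S ∧ omegaS F S U = A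

/-- `R` is a repeller in `S`: the `α_S`-limit set of a neighborhood of itself in `S`. -/
def IsRepellerIn (F : E → Set E) (S R : Set E) : Prop :=
  R ⊆ S ∧ ∃ U, R ⊆ relInt S U ∧ U ⊆ S ∧ alphaS F S U = R

/-- The dual repeller of an attractor `A` in `S`. -/
def dualRep (F : E → Set E) (S A : Set E) : Set E :=
  {x ∈ S | ¬ omegaS F S {x} ⊆ A}

/-- The dual attractor of a repeller `R` in `S`. -/
def dualAtt (F : E → Set E) (S R : Set E) : Set E :=
  {x ∈ S | ¬ alphaS F S {x} ⊆ R}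

end DIncl

open scoped NNReal

section LipschitzFTC

variable {E : Type*} [NormedAddCommGroup E] [NormedSpace ℝ E] [FiniteDimensional ℝ E]
  {K : ℝ≥0} {y : ℝ → E}

theorem LipschitzWith.intervalIntegrable_deriv (hy : LipschitzWith K y) (a b : ℝ) :
    IntervalIntegrable (deriv y) volume a b :=
  (intervalIntegrable_const (c := (K : ℝ))).mono_fun' (aestronglyMeasurable_deriv y _)
    (Eventually.of_forall fun _ => norm_deriv_le_of_lipschitz hy)

theorem LipschitzWith.integral_deriv_eq_sub (hy : LipschitzWith K y) (a b : ℝ) :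
    ∫ t in a..b, deriv y t = y b - y a := by
  -- The FTC for absolutely continuous functions is only available for real-valued ones.
  refine SeparatingDual.eq_iff_forall_dual_eq (R := ℝ) |>.2 fun φ => ?_
  have hφy : ∀ᵐ t, t ∈ uIoc a b → φ (deriv y t) = deriv (φ ∘ y) t := by
    filter_upwards [hy.ae_differentiableAt_real] with t ht _
    exact ((φ.hasFDerivAt.comp_hasDerivAt t ht.hasDerivAt).deriv).symm
  rw [← φ.intervalIntegral_comp_comm (hy.intervalIntegrable_deriv a b),
    intervalIntegral.integral_congr_ae hφy, map_sub,
    ((φ.lipschitz.comp hy).lipschitzOnWith (s := uIcc a b)).absolutelyContinuousOnInterval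
      |>.integral_deriv_eq_sub]
  rfl

end LipschitzFTC

namespace DIncl

section SetValued

variable {α β : Type*} [PseudoMetricSpace α] [PseudoMetricSpace β] {F : α → Set β} {D D' : Set α}

theorem USCOn.mono (hF : USCOn F D) (h : D' ⊆ D) : USCOn F D' := fun x hx ε hε =>
  let ⟨δ, hδ, hFδ⟩ := hF x (h hx) ε hε
  ⟨δ, hδ, fun y hy => hFδ y (h hy)⟩

theorem USCOn.isBounded_biUnion (hF : USCOn F D) (hD : IsCompact D)
    (hb : ∀ x ∈ D, Bornology.IsBounded (F x)) : Bornology.IsBounded (⋃ x ∈ D, F x) := by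
  refine hD.induction_on (p := fun s => Bornology.IsBounded (⋃ x ∈ s, F x)) (by simp)
    (fun s t hst ht => ht.subset (biUnion_subset_biUnion_left hst))
    (fun s t hs ht => by rw [biUnion_union]; exact hs.union ht) fun x hx => ?_
  obtain ⟨δ, hδ, hFδ⟩ := hF x hx 1 one_pos
  refine ⟨D ∩ Metric.ball x δ, inter_mem_nhdsWithin D (Metric.ball_mem_nhds x hδ), ?_⟩
  refine ((hb x hx).thickening (δ := 1)).subset (iUnion₂_subset fun y hy z hz => ?_)
  exact Metric.mem_thickening_iff.2 (hFδ y hy.1 hy.2 hz)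

end SetValued

variable {E : Type*} [NormedAddCommGroup E] [NormedSpace ℝ E]

theorem FilippovOn.mono {α : Type*} [PseudoMetricSpace α] {F : α → Set E} {D D' : Set α}
    (hF : FilippovOn F D) (h : D' ⊆ D) : FilippovOn F D' :=
  ⟨hF.1.mono h, fun x hx => hF.2 x (h hx)⟩

theorem FilippovOn.exists_norm_le {α : Type*} [PseudoMetricSpace α] {F : α → Set E} {D : Set α}
    (hF : FilippovOn F D) (hD : IsCompact D) : ∃ M : ℝ≥0, ∀ x ∈ D, ∀ w ∈ F x, ‖w‖ ≤ M := by
  obtain ⟨C, hC⟩ := isBounded_iff_forall_norm_le.1 <|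
    hF.1.isBounded_biUnion hD fun x hx => (hF.2 x hx).1.isBounded
  exact ⟨C.toNNReal, fun x hx w hw => (hC w (mem_biUnion hx hw)).trans (Real.le_coe_toNNReal C)⟩

section Solutions

variable {F : E → Set E} {X : Set E} {x : ℝ → E} {I J : Set ℝ}

theorem IsSolOn.mono (h : IsSolOn F X x I) (hJ : J ⊆ I) : IsSolOn F X x J := by
  obtain ⟨hxX, v, hvi, hv, hxv⟩ := h
  exact ⟨fun t ht => hxX t (hJ ht), v, fun a ha b hb => hvi a (hJ ha) b (hJ hb),
    hv.mono fun t ht htJ => ht (hJ htJ), fun a ha b hb => hxv a (hJ ha) b (hJ hb)⟩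

theorem IsSolOn.comp_add_right (h : IsSolOn F X x I) (c : ℝ) :
    IsSolOn F X (fun t => x (t + c)) ((· + c) ⁻¹' I) := by
  obtain ⟨hxX, v, hvi, hv, hxv⟩ := h
  refine ⟨fun t ht => hxX _ ht, fun t => v (t + c), fun a ha b hb => ?_,
    (measurePreserving_add_right volume c).quasiMeasurePreserving.ae hv, fun a ha b hb => ?_⟩
  · simpa using (hvi _ ha _ hb).comp_add_right c
  · rw [intervalIntegral.integral_comp_add_right (fun t => v t) c]
    exact hxv _ ha _ hb

theorem IsSolOn.lipschitzOnWith [I.OrdConnected] {M : ℝ≥0} (h : IsSolOn F X x I)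
    (hM : ∀ p ∈ X, ∀ w ∈ F p, ‖w‖ ≤ M) : LipschitzOnWith M x I := by
  obtain ⟨hxX, v, -, hv, hxv⟩ := h
  refine LipschitzOnWith.of_dist_le_mul fun b hb a ha => ?_
  rw [dist_eq_norm, hxv a ha b hb, add_sub_cancel_left, Real.dist_eq]
  refine intervalIntegral.norm_integral_le_of_norm_le_const_ae ?_
  filter_upwards [hv] with t ht htab
  have htI : t ∈ I := Set.OrdConnected.uIcc_subset ‹_› ha hb (uIoc_subset_uIcc htab)
  exact hM _ (hxX t htI) _ (ht htI)

theorem IsSolOn.slope_mem [CompleteSpace E] [I.OrdConnected] {C : Set E} (h : IsSolOn F X x I)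
    {a b : ℝ} (ha : a ∈ I) (hb : b ∈ I) (hab : a < b) (hC : Convex ℝ C) (hCc : IsClosed C)
    (hFC : ∀ t ∈ Ioc a b, F (x t) ⊆ C) : slope x a b ∈ C := by
  obtain ⟨-, v, hvi, hv, hxv⟩ := h
  have hIoc : Ioc a b ⊆ I := Ioc_subset_Icc_self.trans (Set.OrdConnected.out ‹_› ha hb)
  have hvC : ∀ᵐ t ∂volume.restrict (Ioc a b), v t ∈ C := by
    filter_upwards [ae_restrict_of_ae hv, ae_restrict_mem measurableSet_Ioc] with t ht htab
    exact hFC t htab (ht (hIoc htab))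
  have havg := hC.set_average_mem hCc (by simp [hab]) (by simp) hvC (hvi a ha b hb).1
  rwa [slope_def_module, hxv a ha b hb, add_sub_cancel_left, ← interval_average_eq,
    uIoc_of_le hab.le]

end Solutions

section Multiflow

variable {F : E → Set E} {S : Set E}

theorem mem_mflowSet {I : Set ℝ} {U : Set E} {z : E} :
    z ∈ mflowSet F S I U ↔ ∃ t ∈ I, ∃ a ∈ U, z ∈ mflow F S t a := by
  simp [mflowSet]

theorem mflow_subset {t : ℝ} (ht : 0 ≤ t) (a : E) : mflow F S t a ⊆ S := by
  rintro b ⟨x, hx, -, rfl⟩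
  exact hx.1 t ⟨ht, le_rfl⟩

theorem mem_of_mem_mflow {t : ℝ} (ht : 0 ≤ t) {a b : E} (h : b ∈ mflow F S t a) : a ∈ S := by
  obtain ⟨x, hx, rfl, -⟩ := h
  exact hx.1 0 ⟨le_rfl, ht⟩

theorem mflow_subset_mflowSet_mflow {r s : ℝ} (hr : 0 ≤ r) (hrs : r ≤ s) (a : E) :
    mflow F S s a ⊆ mflowSet F S {s - r} (mflow F S r a) := by
  rintro b ⟨x, hx, rfl, rfl⟩
  refine mem_mflowSet.2 ⟨s - r, rfl, x r, ⟨x, hx.mono (Icc_subset_Icc le_rfl hrs), rfl, rfl⟩,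
    fun t => x (t + r), (hx.comp_add_right r).mono fun t ht => ?_, by simp, by simp⟩
  simp only [mem_preimage, mem_Icc] at ht ⊢
  constructor <;> linarith [ht.1, ht.2]

theorem mflowSet_mono {I J : Set ℝ} {U V : Set E} (hIJ : I ⊆ J) (hUV : U ⊆ V) :
    mflowSet F S I U ⊆ mflowSet F S J V :=
  biUnion_mono hIJ fun _ _ => biUnion_subset_biUnion_left hUV

theorem mflowSet_Ici_subset {t : ℝ} (ht : 0 ≤ t) (U : Set E) : mflowSet F S (Ici t) U ⊆ S :=
  iUnion₂_subset fun _ hs => iUnion₂_subset fun a _ => mflow_subset (ht.trans hs) a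

theorem mflowSet_Ici_add_subset {s t : ℝ} (hs : 0 ≤ s) (ht : 0 ≤ t) (U : Set E) :
    mflowSet F S (Ici (s + t)) U ⊆ mflowSet F S {t} (mflowSet F S (Ici s) U) := by
  intro z hz
  obtain ⟨τ, hτ, a, ha, hz⟩ := mem_mflowSet.1 hz
  obtain ⟨r, hr, b, hb, hzb⟩ := mem_mflowSet.1 <|
    mflow_subset_mflowSet_mflow (r := τ - t) (by linarith [mem_Ici.1 hτ]) (by linarith) a hz
  rw [mem_singleton_iff.1 hr, sub_sub_cancel] at hzb
  refine mem_mflowSet.2 ⟨t, rfl, b, mem_mflowSet.2 ⟨τ - t, ?_, a, ha, hb⟩, hzb⟩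
  rw [mem_Ici] at hτ ⊢
  linarith

theorem omegaS_mono {U V : Set E} (h : U ⊆ V) : omegaS F S U ⊆ omegaS F S V :=
  biInter_mono Subset.rfl fun _ _ => closure_mono (mflowSet_mono Subset.rfl h)

theorem isClosed_omegaS (U : Set E) : IsClosed (omegaS F S U) :=
  isClosed_biInter fun _ _ => isClosed_closure

theorem alphaS_subset (hS : IsClosed S) (U : Set E) : alphaS F S U ⊆ S := by
  refine (biInter_subset_of_mem (show (-1 : ℝ) ∈ Iio 0 by norm_num)).trans ?_
  refine hS.closure_subset_iff.2 (iUnion₂_subset fun s hs => iUnion₂_subset fun a _ b hb => ?_)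
  exact mem_of_mem_mflow (by linarith [mem_Iic.1 hs]) hb

end Multiflow


section Limits

variable [CompleteSpace E] {F : E → Set E} {S : Set E}

theorem deriv_mem_of_tendsto {ι : Type*} {l : Filter ι} [l.NeBot] {xs : ι → ℝ → E}
    {y : ℝ → E} {m t : ℝ} {M : ℝ≥0} (hF : FilippovOn F S) (hM : ∀ p ∈ S, ∀ w ∈ F p, ‖w‖ ≤ M)
    (hxs : ∀ᶠ i in l, IsSolOn F S (xs i) (Icc 0 m))
    (hlim : ∀ s ∈ Icc 0 m, Tendsto (fun i => xs i s) l (𝓝 (y s)))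
    (ht : t ∈ Ico 0 m) (hyS : y t ∈ S) (hy : DifferentiableAt ℝ y t) :
    deriv y t ∈ F (y t) := by
  obtain ⟨hcpt, hcvx, -⟩ := hF.2 _ hyS
  rw [← hcpt.isClosed.closure_eq, Metric.closure_eq_iInter_cthickening]
  refine mem_iInter₂.2 fun ε hε => ?_
  obtain ⟨δ, hδ, hFδ⟩ := hF.1 _ hyS ε hε
  have hC : Convex ℝ (Metric.cthickening ε (F (y t))) := hcvx.cthickening ε
  have hCc : IsClosed (Metric.cthickening ε (F (y t))) := Metric.isClosed_cthickening
  have htm : t ∈ Icc 0 m := Ico_subset_Icc_self ht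
  have hslope : ∀ s, t < s → s ≤ m → M * (s - t) < δ / 2 →
      slope y t s ∈ Metric.cthickening ε (F (y t)) := by
    intro s hts hsm hsδ
    have hsm' : s ∈ Icc 0 m := ⟨ht.1.trans hts.le, hsm⟩
    refine hCc.mem_of_tendsto (((hlim s hsm').sub (hlim t htm)).const_smul (s - t)⁻¹) ?_
    filter_upwards [hxs, (hlim t htm).eventually (Metric.ball_mem_nhds _ (half_pos hδ))]
      with i hi hit
    refine hi.slope_mem htm hsm' hts hC hCc fun r hr => ?_
    have hr' : r ∈ Icc 0 m := ⟨ht.1.trans hr.1.le, hr.2.trans hsm⟩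
    have hrt : dist (xs i r) (xs i t) ≤ M * (s - t) := by
      refine ((hi.lipschitzOnWith hM).dist_le_mul r hr' t htm).trans ?_
      rw [Real.dist_eq, abs_of_pos (sub_pos.2 hr.1)]
      exact mul_le_mul_of_nonneg_left (by linarith [hr.2]) M.coe_nonneg
    have hdist : dist (xs i r) (y t) < δ := by
      linarith [dist_triangle (xs i r) (xs i t) (y t), Metric.mem_ball.1 hit]
    exact fun z hz => Metric.thickening_subset_cthickening ε _ <|
      Metric.mem_thickening_iff.2 (hFδ _ (hi.1 r hr') hdist hz)
  have hder : Tendsto (slope y t) (𝓝[>] t) (𝓝 (deriv y t)) :=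
    (hasDerivWithinAt_iff_tendsto_slope' (lt_irrefl t)).1 hy.hasDerivAt.hasDerivWithinAt
  have hnear : ∀ᶠ s in 𝓝 t, s ≤ m ∧ M * (s - t) < δ / 2 :=
    (eventually_le_nhds ht.2).and <|
      (Continuous.tendsto (f := fun s : ℝ => (M : ℝ) * (s - t)) (by fun_prop) t).eventually_lt_const
        (by simpa using half_pos hδ)
  refine hCc.mem_of_tendsto hder ?_
  filter_upwards [self_mem_nhdsWithin, nhdsWithin_le_nhds hnear] with s hts hs
  exact hslope s hts hs.1 hs.2

theorem isClosed_setOf_mem_mflow [FiniteDimensional ℝ E] (hF : FilippovOn F S) (hS : IsCompact S)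
    {m : ℝ} (hm : 0 ≤ m) : IsClosed {p : E × E | p.2 ∈ mflow F S m p.1} := by
  obtain ⟨M, hM⟩ := hF.exists_norm_le hS
  refine isClosed_iff_ultrafilter.2 fun bc 𝒰 h𝒰 hG => ?_
  have hsol : ∀ p ∈ {p : E × E | p.2 ∈ mflow F S m p.1}, ∃ x : ℝ → E,
      IsSolOn F S x (Icc 0 m) ∧ x 0 = p.1 ∧ x m = p.2 := fun _ hp => hp
  choose! xs hxs using hsol
  -- Clamped to `[0, m]`, the solutions become globally `M`-Lipschitz maps `ℝ → S`.
  set ys : E × E → ℝ → E := fun p t => xs p (projIcc 0 m hm t)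
  have hys : ∀ᶠ p in 𝒰, LipschitzWith M (ys p) ∧ ∀ t, ys p t ∈ S := by
    filter_upwards [hG] with p hp
    refine ⟨?_, fun t => (hxs p hp).1.1 _ (projIcc 0 m hm t).2⟩
    have := ((hxs p hp).1.lipschitzOnWith hM).to_restrict.comp (LipschitzWith.projIcc hm)
    rwa [mul_one] at this
  obtain ⟨y, hyS, hy⟩ := (isCompact_univ_pi fun _ : ℝ => hS).ultrafilter_le_nhds (𝒰.map ys) <| by
    rw [Ultrafilter.coe_map, le_principal_iff, Filter.mem_map]
    filter_upwards [hys] with p hp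
    exact fun t _ => hp.2 t
  rw [Ultrafilter.coe_map] at hy
  have hlim : ∀ t ∈ Icc 0 m, Tendsto (fun p => xs p t) 𝒰 (𝓝 (y t)) := fun t ht => by
    simpa [ys, projIcc_of_mem hm ht] using tendsto_pi_nhds.1 hy t
  have hylip : LipschitzWith M y :=
    (isClosed_setOfPred_lipschitzWith M).mem_of_tendsto hy (hys.mono fun _ h => h.1)
  have hend : ∀ t ∈ Icc 0 m, ∀ f : E × E → E, Continuous f →
      (∀ p ∈ {p : E × E | p.2 ∈ mflow F S m p.1}, xs p t = f p) → y t = f bc :=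
    fun t ht f hf hxf => tendsto_nhds_unique (hlim t ht) <|
      ((hf.tendsto bc).mono_left h𝒰).congr' (Filter.mem_of_superset hG fun p hp => (hxf p hp).symm)
  refine ⟨y, ⟨fun t _ => hyS t trivial, deriv y, fun a _ b _ => hylip.intervalIntegrable_deriv a b,
    ?_, fun a _ b _ => by rw [hylip.integral_deriv_eq_sub, add_sub_cancel]⟩,
    hend 0 ⟨le_rfl, hm⟩ Prod.fst continuous_fst fun p hp => (hxs p hp).2.1,
    hend m ⟨hm, le_rfl⟩ Prod.snd continuous_snd fun p hp => (hxs p hp).2.2⟩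
  filter_upwards [hylip.ae_differentiableAt_real, Measure.ae_ne volume m] with t hdiff htm ht
  exact deriv_mem_of_tendsto hF hM (Filter.mem_of_superset hG fun p hp => (hxs p hp).1) hlim
    ⟨ht.1, ht.2.lt_of_ne htm⟩ (hyS t trivial) hdiff

end Limits

section Dynamics

variable [FiniteDimensional ℝ E] {F : E → Set E} {S : Set E}

theorem isCompact_mflowSet_singleton (hF : FilippovOn F S) (hS : IsCompact S) {m : ℝ} (hm : 0 ≤ m)
    {K : Set E} (hK : IsCompact K) : IsCompact (mflowSet F S {m} K) := by
  have himage :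
      mflowSet F S {m} K = Prod.snd '' ({p : E × E | p.2 ∈ mflow F S m p.1} ∩ K ×ˢ S) := by
    ext c
    simp only [mem_mflowSet, mem_singleton_iff, exists_eq_left, mem_image, mem_inter_iff,
      mem_ofPred_eq, mem_prod, Prod.exists, exists_eq_right]
    exact ⟨fun ⟨a, ha, hc⟩ => ⟨a, hc, ha, mflow_subset hm a hc⟩, fun ⟨a, hc, ha, _⟩ => ⟨a, ha, hc⟩⟩
  rw [himage]
  exact ((hK.prod hS).inter_left (isClosed_setOf_mem_mflow hF hS hm)).image continuous_snd

theorem eventually_mflow_subset (hF : FilippovOn F S) (hS : IsCompact S) {m : ℝ} (hm : 0 ≤ m)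
    {y : E} {O : Set E} (hO : IsOpen O) (hyO : mflow F S m y ⊆ O) :
    ∀ᶠ b in 𝓝 y, mflow F S m b ⊆ O := by
  have hfar : ∀ᶠ b in 𝓝 y, ∀ c ∈ S \ O, c ∉ mflow F S m b :=
    (hS.diff hO).eventually_forall_of_forall_eventually fun c hc =>
      (isClosed_setOf_mem_mflow hF hS hm).isOpen_compl.mem_nhds fun h => hc.2 (hyO h)
  filter_upwards [hfar] with b hb c hc
  by_contra hcO
  exact hb c ⟨mflow_subset hm b hc, hcO⟩ hc

omit [FiniteDimensional ℝ E] in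
theorem exists_mflowSet_Ici_subset (hS : IsCompact S) {U O : Set E} (hO : IsOpen O)
    (hUO : omegaS F S U ⊆ O) : ∃ T, 0 ≤ T ∧ mflowSet F S (Ici T) U ⊆ O := by
  set V : Ici (0 : ℝ) → Set E := fun t => closure (mflowSet F S (Ici t) U)
  have hVS : ∀ t, V t ⊆ S := fun t => hS.isClosed.closure_subset_iff.2 (mflowSet_Ici_subset t.2 U)
  have hanti : Antitone V := fun s t hst =>
    closure_mono (mflowSet_mono (Ici_subset_Ici.2 hst) Subset.rfl)
  obtain ⟨t, ht⟩ := exists_subset_nhds_of_isCompact' hanti.directed_ge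
    (fun t => hS.of_isClosed_subset isClosed_closure (hVS t)) (fun _ => isClosed_closure)
    fun x hx => hO.mem_nhds (hUO (by rwa [omegaS, biInter_eq_iInter]))
  exact ⟨t, t.2, subset_closure.trans ht⟩

theorem exists_mem_alphaS_of_mem_omegaS (hF : FilippovOn F S) (hS : IsCompact S) {U O : Set E}
    {T : ℝ} (hT : 0 ≤ T) (hTO : mflowSet F S (Ici T) U ⊆ O) {x : E} (hx : x ∈ omegaS F S U) :
    ∃ y ∈ closure O ∩ S, y ∈ alphaS F S {x} := by
  have hK : IsCompact (closure O ∩ S) := hS.inter_left isClosed_closure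
  have hback : ∀ j : ℕ, ∃ p ∈ closure O ∩ S, x ∈ mflow F S j p := by
    intro j
    have hsub : mflowSet F S (Ici (T + j)) U ⊆ mflowSet F S {(j : ℝ)} (closure O ∩ S) :=
      (mflowSet_Ici_add_subset hT j.cast_nonneg U).trans <|
        mflowSet_mono Subset.rfl fun z hz => ⟨subset_closure (hTO hz), mflowSet_Ici_subset hT U hz⟩
    have hxj := (isCompact_mflowSet_singleton hF hS j.cast_nonneg hK).isClosed.closure_subset_iff.2
      hsub (mem_iInter₂.1 hx (T + j) (by simp only [mem_Ici]; positivity))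
    simpa [mem_mflowSet] using hxj
  choose p hpK hxp using hback
  obtain ⟨y, hyK, hy⟩ := hK.exists_mapClusterPt (f := atTop) (tendsto_principal.2 (.of_forall hpK))
  refine ⟨y, hyK, mem_iInter₂.2 fun t ht => mem_closure_iff_clusterPt.2 (ClusterPt.mono hy ?_)⟩
  refine tendsto_principal.2 ((eventually_ge_atTop ⌈-t⌉₊).mono fun j hj => ?_)
  simp only [mflowDualSet, mem_iUnion, mem_Iic, mem_singleton_iff, exists_prop, exists_eq_left,
    mem_ofPred_eq]
  refine ⟨-j, ?_, by simpa using hxp j⟩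
  linarith [Nat.le_ceil (-t), (Nat.cast_le (α := ℝ)).2 hj]

theorem mem_omegaS_of_mem_alphaS (hF : FilippovOn F S) (hS : IsCompact S) {x y : E}
    (hy : y ∈ alphaS F S {x}) {U O : Set E} (hO : IsOpen O) (hOU : O ∩ S ⊆ U) {t₀ : ℝ}
    (ht₀ : 0 ≤ t₀) (hyO : mflow F S t₀ y ⊆ O) : x ∈ omegaS F S U := by
  refine mem_iInter₂.2 fun t ht => subset_closure ?_
  have hyB := mem_iInter₂.1 hy (-(t₀ + t + 1)) (by simp only [mem_Iio]; linarith [mem_Ici.1 ht])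
  obtain ⟨b, hbO, hb⟩ := mem_closure_iff_nhds.1 hyB _ (eventually_mflow_subset hF hS ht₀ hO hyO)
  obtain ⟨s, hs, hxb⟩ : ∃ s ≤ -(t₀ + t + 1), x ∈ mflow F S (-s) b := by
    simpa [mflowDualSet] using hb
  obtain ⟨r, hr, z, hz, hxz⟩ :=
    mem_mflowSet.1 (mflow_subset_mflowSet_mflow ht₀ (by linarith [mem_Ici.1 ht]) b hxb)
  refine mem_mflowSet.2 ⟨r, ?_, z, hOU ⟨hbO hz, mflow_subset ht₀ b hz⟩, hxz⟩
  rw [mem_singleton_iff.1 hr, mem_Ici]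
  linarith [mem_Ici.1 ht]

end Dynamics

omit [NormedSpace ℝ E] in
theorem exists_isOpen_inter_subset_of_subset_relInt {S U A : Set E} (h : A ⊆ relInt S U) :
    ∃ O, IsOpen O ∧ A ⊆ O ∧ O ∩ S ⊆ U :=
  ⟨interior {z | z ∈ S → z ∈ U}, isOpen_interior,
    fun _ ha => mem_interior_iff_mem_nhds.2 (mem_nhdsWithin_iff_eventually.1 (h ha).2),
    fun _ hz => interior_subset hz.1 hz.2⟩

end DIncl

open DIncl Set MeasureTheory Filter Topology

theorem attractor_eq_dualAtt_dualRep_general {n : ℕ} (X : Set (Fin n → ℝ))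
    (F : (Fin n → ℝ) → Set (Fin n → ℝ)) (hF : FilippovOn F X)
    (S : Set (Fin n → ℝ)) (hSX : S ⊆ X) (hS : IsCompact S)
    (A : Set (Fin n → ℝ)) (hA : IsAttractorIn F S A) :
    A = dualAtt F S (dualRep F S A) := by
  obtain ⟨hAS, U, hAU, -, rfl⟩ := hA
  have hFS := hF.mono hSX
  obtain ⟨O, hO, hAO, hOU⟩ := exists_isOpen_inter_subset_of_subset_relInt hAU
  refine Subset.antisymm (fun x hx => ⟨hAS hx, fun hR => ?_⟩) fun x ⟨_, hα⟩ => ?_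
  · obtain ⟨O', hO', hAO', hO'O⟩ := normal_exists_closure_subset (isClosed_omegaS U) hO hAO
    obtain ⟨T, hT, hTO'⟩ := exists_mflowSet_Ici_subset hS hO' hAO'
    obtain ⟨y, ⟨hyO', hyS⟩, hyα⟩ := exists_mem_alphaS_of_mem_omegaS hFS hS hT hTO' hx
    exact (hR hyα).2 (omegaS_mono (singleton_subset_iff.2 (hOU ⟨hO'O hyO', hyS⟩)))
  · obtain ⟨y, hyα, hyR⟩ := not_subset.1 hα
    have hyA : omegaS F S {y} ⊆ omegaS F S U :=
      not_not.1 fun h => hyR ⟨alphaS_subset hS.isClosed _ hyα, h⟩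
    obtain ⟨t₀, ht₀, ht₀O⟩ := exists_mflowSet_Ici_subset hS hO (hyA.trans hAO)
    exact mem_omegaS_of_mem_alphaS hFS hS hyα hO hOU ht₀ fun z hz =>
      ht₀O (mem_mflowSet.2 ⟨t₀, self_mem_Ici, y, rfl, hz⟩)

/-- An attractor is the dual attractor of its dual repeller. -/
theorem attractor_eq_dualAtt_dualRep {n : ℕ} (X : Set (Fin n → ℝ)) (hX : IsCompact X)
    (F : (Fin n → ℝ) → Set (Fin n → ℝ)) (hF : FilippovOn F X)
    (S : Set (Fin n → ℝ)) (hSX : S ⊆ X) (hS : IsCompact S) (hSinv : IsInvSet F S)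
    (A : Set (Fin n → ℝ)) (hA : IsAttractorIn F S A) :
    A = dualAtt F S (dualRep F S A) :=
  attractor_eq_dualAtt_dualRep_general X F hF S hSX hS A hA
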